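/- Let φ_1,…,φ_m ∈ ℝ^d be feature vectors spanning ℝ^d. Then there exists a probability distribution π* on {1,…,m} such that V(π*) = Σ_j π*(j) φ_j φ_jᵀ is invertible and g(π*) = max_{1≤j≤m} φ_jᵀ V(π*)^{-1} φ_j = d; in particular, the infimum of g(π) over all probability distributions π with V(π) invertible equals d and is attained. -/

import Mathlib

open Matrix Finset

/-- The design matrix `V(w) = Σ j, w j • φ j (φ j)ᵀ` of feature vectors `φ` under
weights `w`. -/
noncomputable def designMatrix {ι : Type*} [Fintype ι] {d : ℕ} (φ : ι → Fin d → ℝ)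
    (w : ι → ℝ) : Matrix (Fin d) (Fin d) ℝ :=
  ∑ j, w j • vecMulVec (φ j) (φ j)

/-- `g(w) = max_j (φ j)ᵀ V(w)⁻¹ (φ j)`. -/
noncomputable def gOpt {ι : Type*} [Fintype ι] [Nonempty ι] {d : ℕ} (φ : ι → Fin d → ℝ)
    (w : ι → ℝ) : ℝ :=
  Finset.univ.sup' Finset.univ_nonempty (fun j => φ j ⬝ᵥ ((designMatrix φ w)⁻¹ *ᵥ φ j))


/-!
Kiefer–Wolfowitz. Since `Σ_j w_j φ_jᵀ V(w)⁻¹ φ_j = tr (V(w)⁻¹ V(w)) = d`, the maximum `g(w)` of the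
leverages is at least their `w`-average `d`. Conversely, take `w` maximising `det V` on the
(compact) simplex; the maximum is positive because `V` of the uniform weights is positive
definite when the `φ_j` span. By the matrix determinant lemma, moving to the weights
`(w + s e_j) / (1 + s)` multiplies `det V` by `(1 + s)⁻ᵈ (1 + s φ_jᵀ V(w)⁻¹ φ_j)`, which is at most
`1` for every `s > 0`; comparing derivatives at `s = 0` gives `φ_jᵀ V(w)⁻¹ φ_j ≤ d`.
-/

theorem Matrix.det_add_vecMulVec {n α : Type*} [Fintype n] [DecidableEq n] [CommRing α]
    {A : Matrix n n α} (hA : IsUnit A.det) (u v : n → α) :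
    (A + vecMulVec u v).det = A.det * (1 + v ⬝ᵥ A⁻¹ *ᵥ u) := by
  rw [vecMulVec_eq Unit, det_add_replicateCol_mul_replicateRow hA, Matrix.mul_assoc,
    ← replicateCol_mulVec, det_unique (n := Unit), add_apply, one_apply_eq,
    replicateRow_mul_replicateCol_apply]

theorem le_of_forall_pos_one_add_mul_le_pow {c : ℝ} {d : ℕ}
    (h : ∀ s > 0, 1 + s * c ≤ (1 + s) ^ d) : c ≤ d := by
  have hderiv : HasDerivAt (fun s : ℝ => (1 + s) ^ d) d 0 := by
    simpa using ((hasDerivAt_id (0 : ℝ)).const_add 1).fun_pow d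
  refine ge_of_tendsto hderiv.tendsto_slope_zero_right ?_
  filter_upwards [self_mem_nhdsWithin] with s (hs : 0 < s)
  rw [smul_eq_mul, zero_add, add_zero, one_pow, le_inv_mul_iff₀ hs]
  linarith [h s hs]

noncomputable def leverage {ι : Type*} [Fintype ι] {d : ℕ} (φ : ι → Fin d → ℝ)
    (w : ι → ℝ) (j : ι) : ℝ :=
  φ j ⬝ᵥ (designMatrix φ w)⁻¹ *ᵥ φ j

section DesignMatrix

variable {ι : Type*} [Fintype ι] {d : ℕ} (φ : ι → Fin d → ℝ)

theorem designMatrix_add (w v : ι → ℝ) :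
    designMatrix φ (w + v) = designMatrix φ w + designMatrix φ v := by
  simp [designMatrix, add_smul, sum_add_distrib]

theorem designMatrix_smul (c : ℝ) (w : ι → ℝ) :
    designMatrix φ (c • w) = c • designMatrix φ w := by
  simp [designMatrix, smul_sum, mul_smul]

theorem designMatrix_single [DecidableEq ι] (j : ι) (s : ℝ) :
    designMatrix φ (Pi.single j s) = s • vecMulVec (φ j) (φ j) := by
  simp [designMatrix, Pi.single_apply, ite_smul]

theorem dotProduct_designMatrix_mulVec (w : ι → ℝ) (x : Fin d → ℝ) :
    x ⬝ᵥ designMatrix φ w *ᵥ x = ∑ j, w j * (φ j ⬝ᵥ x) ^ 2 := by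
  simp [designMatrix, sum_mulVec, smul_mulVec, vecMulVec_mulVec, sum_dotProduct, smul_dotProduct,
    dotProduct_comm x, sq]

theorem exists_dotProduct_ne_zero (hspan : Submodule.span ℝ (Set.range φ) = ⊤)
    {x : Fin d → ℝ} (hx : x ≠ 0) : ∃ j, φ j ⬝ᵥ x ≠ 0 := by
  by_contra! h
  have hker : Submodule.span ℝ (Set.range φ) ≤ LinearMap.ker ((dotProductBilin ℝ ℝ).flip x) :=
    Submodule.span_le.mpr (Set.range_subset_iff.mpr h)
  rw [hspan] at hker
  exact hx (dotProduct_self_eq_zero.mp (hker Submodule.mem_top))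

theorem posDef_designMatrix (hspan : Submodule.span ℝ (Set.range φ) = ⊤) {w : ι → ℝ}
    (hw : ∀ j, 0 < w j) : (designMatrix φ w).PosDef := by
  refine posDef_iff_dotProduct_mulVec.mpr ⟨?_, fun x hx => ?_⟩
  · ext i k
    simp [designMatrix, Matrix.sum_apply, vecMulVec_apply, mul_comm]
  · obtain ⟨j, hj⟩ := exists_dotProduct_ne_zero φ hspan hx
    rw [star_trivial, dotProduct_designMatrix_mulVec]
    exact sum_pos' (fun i _ => by have := hw i; positivity)
      ⟨j, mem_univ j, by have := hw j; positivity⟩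

theorem sum_mul_leverage {w : ι → ℝ} (hV : IsUnit (designMatrix φ w).det) :
    ∑ j, w j * leverage φ w j = d := by
  calc ∑ j, w j * leverage φ w j = trace ((designMatrix φ w)⁻¹ * designMatrix φ w) := by
        simp [designMatrix, mul_sum, trace_sum, mul_vecMulVec, leverage, dotProduct_comm]
    _ = d := by rw [nonsing_inv_mul _ hV, trace_one, Fintype.card_fin]

theorem le_gOpt [Nonempty ι] {w : ι → ℝ} (hw : w ∈ stdSimplex ℝ ι)
    (hV : IsUnit (designMatrix φ w).det) : (d : ℝ) ≤ gOpt φ w :=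
  calc (d : ℝ) = ∑ j, w j * leverage φ w j := (sum_mul_leverage φ hV).symm
    _ ≤ ∑ j, w j * gOpt φ w :=
        sum_le_sum fun j _ =>
          mul_le_mul_of_nonneg_left (le_sup' (leverage φ w) (mem_univ j)) (hw.1 j)
    _ = gOpt φ w := by rw [← sum_mul, hw.2, one_mul]

theorem det_designMatrix_smul_add_single [DecidableEq ι] {w : ι → ℝ}
    (hV : IsUnit (designMatrix φ w).det) (c s : ℝ) (j : ι) :
    (designMatrix φ (c • (w + Pi.single j s))).det =
      c ^ d * (designMatrix φ w).det * (1 + s * leverage φ w j) := by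
  rw [designMatrix_smul, designMatrix_add, designMatrix_single, ← smul_vecMulVec, det_smul,
    det_add_vecMulVec hV, mulVec_smul, dotProduct_smul, Fintype.card_fin, leverage, smul_eq_mul,
    mul_assoc]

theorem exists_isMaxOn_det_designMatrix [Nonempty ι]
    (hspan : Submodule.span ℝ (Set.range φ) = ⊤) :
    ∃ w ∈ stdSimplex ℝ ι, 0 < (designMatrix φ w).det ∧
      IsMaxOn (fun v => (designMatrix φ v).det) (stdSimplex ℝ ι) w := by
  set u : ι → ℝ := fun _ => (Fintype.card ι : ℝ)⁻¹
  have hu : u ∈ stdSimplex ℝ ι := by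
    refine ⟨fun _ => by positivity, ?_⟩
    simp [u, Fintype.card_ne_zero]
  have hcont : Continuous fun v : ι → ℝ => (designMatrix φ v).det :=
    Continuous.matrix_det <| continuous_finsetSum _ fun j _ =>
      (continuous_apply j).smul continuous_const
  obtain ⟨w, hw, hmax⟩ := (isCompact_stdSimplex ℝ ι).exists_isMaxOn ⟨u, hu⟩ hcont.continuousOn
  have hu_pos : 0 < (designMatrix φ u).det :=
    (posDef_designMatrix φ hspan fun _ => by positivity).det_pos
  exact ⟨w, hw, hu_pos.trans_le (hmax hu), hmax⟩

theorem leverage_le_of_isMaxOn_det {w : ι → ℝ} (hw : w ∈ stdSimplex ℝ ι)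
    (hpos : 0 < (designMatrix φ w).det)
    (hmax : IsMaxOn (fun v => (designMatrix φ v).det) (stdSimplex ℝ ι) w) (j : ι) :
    leverage φ w j ≤ d := by
  classical
  refine le_of_forall_pos_one_add_mul_le_pow fun s hs => ?_
  have hmem : (1 + s)⁻¹ • (w + Pi.single j s) ∈ stdSimplex ℝ ι := by
    refine ⟨fun i => ?_, ?_⟩
    · have hsingle : 0 ≤ (Pi.single j s : ι → ℝ) i := by
        rw [Pi.single_apply]
        split_ifs <;> positivity
      have hwi := hw.1 i
      simp only [Pi.smul_apply, Pi.add_apply, smul_eq_mul]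
      positivity
    · simp [← mul_sum, sum_add_distrib, hw.2, inv_mul_cancel₀ (by positivity : 1 + s ≠ 0)]
  have hle : (designMatrix φ _).det ≤ (designMatrix φ w).det := hmax hmem
  rw [det_designMatrix_smul_add_single φ hpos.ne'.isUnit, inv_pow,
    mul_assoc, inv_mul_le_iff₀ (by positivity)] at hle
  exact le_of_mul_le_mul_left (by linarith) hpos

end DesignMatrix

/-- **Existence of a G-optimal design.** Let `φ 1, …, φ m ∈ ℝ^d` span `ℝ^d`. Then there
exists a probability distribution `ws` on `{1, …, m}` such that `V(ws)` is invertible and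
`g(ws) = max_j (φ j)ᵀ V(ws)⁻¹ (φ j) = d`; in particular, the infimum of `g(w)` over all
probability distributions `w` with `V(w)` invertible equals `d` and is attained. -/
theorem g_optimal_design_exists
    {ι : Type*} [Fintype ι] [Nonempty ι] {d : ℕ} (φ : ι → Fin d → ℝ)
    (hspan : Submodule.span ℝ (Set.range φ) = ⊤) :
    (∃ ws : ι → ℝ, (∀ j, 0 ≤ ws j) ∧ ∑ j, ws j = 1 ∧
      IsUnit (designMatrix φ ws).det ∧ gOpt φ ws = d) ∧
    IsLeast {x : ℝ | ∃ w : ι → ℝ, (∀ j, 0 ≤ w j) ∧ ∑ j, w j = 1 ∧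
      IsUnit (designMatrix φ w).det ∧ gOpt φ w = x} d := by
  obtain ⟨w, hw, hpos, hmax⟩ := exists_isMaxOn_det_designMatrix φ hspan
  have hg : gOpt φ w = d :=
    (sup'_le _ _ fun j _ => leverage_le_of_isMaxOn_det φ hw hpos hmax j).antisymm
      (le_gOpt φ hw hpos.ne'.isUnit)
  refine ⟨⟨w, hw.1, hw.2, hpos.ne'.isUnit, hg⟩, ⟨w, hw.1, hw.2, hpos.ne'.isUnit, hg⟩, ?_⟩
  rintro _ ⟨v, hv₀, hv₁, hV, rfl⟩
  exact le_gOpt φ ⟨hv₀, hv₁⟩ hV
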